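/- arXiv:1011.2189 — 4 statements merged into one kernel-verified Lean document; each statement's English description precedes it below -/
import Mathlib

section
/- Let f : A → B be a surjective quasi-isomorphism of non-negatively graded differential graded commutative algebras with kernel K, and set I_A = ker(A → H₀(A)). If I_A·K = 0, then K₀ consists entirely of boundaries of elements of K₁, hence K ⊆ I_A, and therefore K·K ⊆ I_A·K = 0. In other words, every acyclic little extension of non-negatively graded dg algebras is a square-zero extension. -/
/-!
Acyclicity in degree 0 says that every element of `K₀` is a boundary `d b` with `b ∈ K₁`
(every degree-0 element is a cycle). Since `K` is homogeneous, it is then additively generated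
by positive-degree elements and boundaries, i.e. `K ⊆ I_A`; as `I_A` annihilates `K`,
so does `K`.
-/

open DirectSum

/-- A non-negatively graded differential graded-commutative ring: an (internally) `ℕ`-graded
ring `R` together with a degree `-1` differential `d` satisfying `d² = 0`, the graded
Leibniz rule, and graded commutativity. -/
class DGRing (R : Type*) [Ring R] (𝒜 : ℕ → AddSubgroup R) [GradedRing 𝒜]
    (d : R →+ R) : Prop where
  d_mem : ∀ (n : ℕ) (a : R), a ∈ 𝒜 (n + 1) → d a ∈ 𝒜 n
  d_zero : ∀ a ∈ 𝒜 0, d a = 0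
  d_d : ∀ a : R, d (d a) = 0
  leibniz : ∀ (i j : ℕ) (a b : R), a ∈ 𝒜 i → b ∈ 𝒜 j →
    d (a * b) = d a * b + ((-1 : ℤ) ^ i) • (a * d b)
  gcomm : ∀ (i j : ℕ) (a b : R), a ∈ 𝒜 i → b ∈ 𝒜 j →
    a * b = ((-1 : ℤ) ^ (i * j)) • (b * a)

/-- The generating set of the good truncation `τ_{≥ r} K` of a dg ideal `K`: homogeneous
elements of `K` of degree `> r`, together with the `r`-cycles of `K`. -/
def truncSet {R : Type*} [Ring R] (𝒜 : ℕ → AddSubgroup R) (d : R →+ R)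
    (K : Ideal R) (r : ℕ) : Set R :=
  {x | (∃ i : ℕ, r < i ∧ x ∈ 𝒜 i ∧ x ∈ K) ∨ (x ∈ 𝒜 r ∧ x ∈ K ∧ d x = 0)}

theorem Ideal.IsHomogeneous.subset_addSubgroupClosure {R : Type*} [Ring R]
    {𝒜 : ℕ → AddSubgroup R} [GradedRing 𝒜] {K : Ideal R} (hK : K.IsHomogeneous 𝒜)
    {S : Set R} (hS : ∀ i, ∀ x ∈ K, x ∈ 𝒜 i → x ∈ S) :
    (K : Set R) ⊆ AddSubgroup.closure S := by
  classical
  intro x hx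
  rw [← DirectSum.sum_support_decompose 𝒜 x]
  exact AddSubgroup.sum_mem _ fun i _ =>
    AddSubgroup.subset_closure (hS i _ (hK i hx) (SetLike.coe_mem _))

theorem AddSubgroup.mul_eq_zero_of_mem_closure {R : Type*} [Ring R] {S : Set R} {x y : R}
    (hS : ∀ a ∈ S, a * y = 0) (hx : x ∈ AddSubgroup.closure S) : x * y = 0 :=
  (AddSubgroup.closure_le (K := (AddMonoidHom.mulRight y).ker)).2 hS hx

theorem DGRing.exists_boundary_of_mem_degree_zero {R : Type*} [Ring R]
    {𝒜 : ℕ → AddSubgroup R} [GradedRing 𝒜] {d : R →+ R} [DGRing R 𝒜 d] {K : Ideal R}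
    (hacy : ∀ a ∈ K, a ∈ 𝒜 0 → d a = 0 → ∃ b, b ∈ K ∧ b ∈ 𝒜 1 ∧ d b = a)
    {x : R} (hxK : x ∈ K) (hx : x ∈ 𝒜 0) : ∃ b, b ∈ K ∧ b ∈ 𝒜 1 ∧ d b = x :=
  hacy x hxK hx (DGRing.d_zero x hx)

theorem acyclic_little_extension_is_squareZero_general {R : Type*} [Ring R]
    (𝒜 : ℕ → AddSubgroup R) [GradedRing 𝒜] (d : R →+ R) [DGRing R 𝒜 d]
    (K : Ideal R) (hhom : Ideal.IsHomogeneous 𝒜 K)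
    (hacy : ∀ (n : ℕ) (a : R), a ∈ K → a ∈ 𝒜 n → d a = 0 →
      ∃ b, b ∈ K ∧ b ∈ 𝒜 (n + 1) ∧ d b = a)
    (hann : ∀ a x : R, ((∃ n : ℕ, a ∈ 𝒜 (n + 1)) ∨ (∃ b ∈ 𝒜 1, d b = a)) → x ∈ K →
      a * x = 0) :
    (∀ x ∈ K, x ∈ 𝒜 0 → ∃ b, b ∈ K ∧ b ∈ 𝒜 1 ∧ d b = x) ∧
    ((K : Set R) ⊆ (AddSubgroup.closure
      {a : R | (∃ n : ℕ, a ∈ 𝒜 (n + 1)) ∨ ∃ b ∈ 𝒜 1, d b = a} : AddSubgroup R)) ∧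
    (∀ x ∈ K, ∀ y ∈ K, x * y = 0) := by
  have hbdry : ∀ x ∈ K, x ∈ 𝒜 0 → ∃ b, b ∈ K ∧ b ∈ 𝒜 1 ∧ d b = x :=
    fun x => DGRing.exists_boundary_of_mem_degree_zero (hacy 0)
  have hsub : (K : Set R) ⊆ (AddSubgroup.closure
      {a : R | (∃ n : ℕ, a ∈ 𝒜 (n + 1)) ∨ ∃ b ∈ 𝒜 1, d b = a} : AddSubgroup R) := by
    refine hhom.subset_addSubgroupClosure fun i x hxK hx => ?_
    rcases i with _ | n
    · obtain ⟨b, -, hb, rfl⟩ := hbdry x hxK hx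
      exact Or.inr ⟨b, hb, rfl⟩
    · exact Or.inl ⟨n, hx⟩
  exact ⟨hbdry, hsub, fun x hx y hy =>
    AddSubgroup.mul_eq_zero_of_mem_closure (fun a ha => hann a y ha hy) (hsub hx)⟩

/-- Every acyclic little extension of non-negatively graded dg algebras is square-zero:
if `K` is an acyclic dg ideal of `A` (the kernel of a surjective quasi-isomorphism) with
`I_A · K = 0`, where `I_A = ker (A → H₀ A)`, then `K₀` consists of boundaries of `K₁`,
`K ⊆ I_A`, and `K · K = 0`. -/
theorem acyclic_little_extension_is_squareZero {R : Type*} [Ring R]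
    (𝒜 : ℕ → AddSubgroup R) [GradedRing 𝒜] (d : R →+ R) [DGRing R 𝒜 d]
    (K : Ideal R) (hhom : Ideal.IsHomogeneous 𝒜 K) (hdK : ∀ x ∈ K, d x ∈ K)
    (hacy : ∀ (n : ℕ) (a : R), a ∈ K → a ∈ 𝒜 n → d a = 0 →
      ∃ b, b ∈ K ∧ b ∈ 𝒜 (n + 1) ∧ d b = a)
    (hann : ∀ a x : R, ((∃ n : ℕ, a ∈ 𝒜 (n + 1)) ∨ (∃ b ∈ 𝒜 1, d b = a)) → x ∈ K →
      a * x = 0) :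
    (∀ x ∈ K, x ∈ 𝒜 0 → ∃ b, b ∈ K ∧ b ∈ 𝒜 1 ∧ d b = x) ∧
    ((K : Set R) ⊆ (AddSubgroup.closure
      {a : R | (∃ n : ℕ, a ∈ 𝒜 (n + 1)) ∨ ∃ b ∈ 𝒜 1, d b = a} : AddSubgroup R)) ∧
    (∀ x ∈ K, ∀ y ∈ K, x * y = 0) :=
  acyclic_little_extension_is_squareZero_general 𝒜 d K hhom hacy hann
end

section
/- Let A be a non-negatively graded dg commutative algebra concentrated in degrees [0, d] (A_i = 0 for i > d), and K ⊆ A an acyclic dg ideal. Then the surjective quasi-isomorphism A → A/K factors as the finite composite A = A/τ_{≥d}K → A/τ_{≥(d−1)}K → ⋯ → A/τ_{≥0}K = A/K of surjective quasi-isomorphisms, each of whose kernels is a two-term acyclic complex concentrated in two adjacent degrees. -/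
/-!
The generators of `τ_{≥ r} K` lie in `K` and in the good truncation `τ_{≥ r} A = A_{> r} ⊕ Z_r(A)`
of `A`, which is an ideal because `A` is non-negatively graded and `d` kills `A_0`. So a
homogeneous element of `τ_{≥ r} K` of degree `n` vanishes if `n < r`, is a cycle if `n = r`, and
lies in `τ_{≥ r+1} K` if `n > r + 1`, or if `n = r + 1` and it is a cycle: the kernel of
`A/τ_{≥ r+1} K → A/τ_{≥ r} K` lives in degrees `r, r + 1`. Its homology vanishes because an
`r`-cycle of `K` bounds an element of `K_{r+1} ⊆ τ_{≥ r} K`. At the ends, `τ_{≥ 0} K = K` since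
`K` is homogeneous and `d` vanishes on `K_0`, and `τ_{≥ D} K = Z_D(K) = d(K_{D+1}) = 0`.
-/

open DirectSum

section GoodTruncation

variable {R : Type*} [Ring R] {𝒜 : ℕ → AddSubgroup R} [GradedRing 𝒜]

theorem coe_decompose_mul_of_forall_lt_eq_zero {r : ℕ} {x : R}
    (hx : ∀ j < r, decompose 𝒜 x j = 0) (a : R) :
    (decompose 𝒜 (a * x) r : R) = decompose 𝒜 a 0 * decompose 𝒜 x r := by
  rw [decompose_mul, coe_mul_apply_eq_sum_antidiagonal,
    Finset.sum_eq_single_of_mem (0, r) (by simp)]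
  rintro ⟨i, j⟩ hij hne
  have hj : j < r := by
    rw [Finset.HasAntidiagonal.mem_antidiagonal] at hij
    by_contra! h
    exact hne (Prod.ext (by simp only; omega) (by simp only; omega))
  rw [hx j hj, ZeroMemClass.coe_zero, mul_zero]

variable (𝒜) (d : R →+ R) [DGRing R 𝒜 d]

def goodTrunc (r : ℕ) : Ideal R where
  carrier := {x | (∀ n < r, decompose 𝒜 x n = 0) ∧ d (decompose 𝒜 x r : R) = 0}
  zero_mem' := by simp
  add_mem' := by
    rintro x y ⟨hx, hdx⟩ ⟨hy, hdy⟩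
    refine ⟨fun n hn => ?_, ?_⟩
    · rw [decompose_add, DirectSum.add_apply, hx n hn, hy n hn, add_zero]
    · rw [decompose_add, DirectSum.add_apply, AddSubgroup.coe_add, map_add, hdx, hdy, add_zero]
  smul_mem' := by
    rintro a x ⟨hx, hdx⟩
    refine ⟨fun n hn => ?_, ?_⟩
    · rw [smul_eq_mul, decompose_mul]
      exact mul_apply_eq_zero (m := 0) (by simp) hx (by simpa using hn)
    · rw [smul_eq_mul, coe_decompose_mul_of_forall_lt_eq_zero hx,
        DGRing.leibniz 0 r _ _ (SetLike.coe_mem _) (SetLike.coe_mem _),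
        DGRing.d_zero (d := d) _ (SetLike.coe_mem _), hdx]
      simp

variable {𝒜 d}

theorem eq_zero_of_mem_goodTrunc_of_lt {r n : ℕ} {x : R} (hx : x ∈ goodTrunc 𝒜 d r)
    (hxn : x ∈ 𝒜 n) (hnr : n < r) : x = 0 := by
  simpa [decompose_of_mem_same 𝒜 hxn] using congrArg Subtype.val (hx.1 n hnr)

theorem d_eq_zero_of_mem_goodTrunc {r : ℕ} {x : R} (hx : x ∈ goodTrunc 𝒜 d r)
    (hxr : x ∈ 𝒜 r) : d x = 0 := by
  simpa [decompose_of_mem_same 𝒜 hxr] using hx.2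

theorem mem_goodTrunc_of_mem_of_le {r n : ℕ} {x : R} (hxn : x ∈ 𝒜 n) (hrn : r ≤ n)
    (hdx : n = r → d x = 0) : x ∈ goodTrunc 𝒜 d r := by
  refine ⟨fun m hm => Subtype.ext (decompose_of_mem_ne 𝒜 hxn (by omega)), ?_⟩
  rcases hrn.eq_or_lt with rfl | hlt
  · rw [decompose_of_mem_same 𝒜 hxn, hdx rfl]
  · rw [decompose_of_mem_ne 𝒜 hxn hlt.ne', map_zero]

end GoodTruncation

section TruncationOfIdeal

variable {R : Type*} [Ring R] {𝒜 : ℕ → AddSubgroup R} {d : R →+ R} {K : Ideal R}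

theorem span_truncSet_succ_le (r : ℕ) :
    Ideal.span (truncSet 𝒜 d K (r + 1)) ≤ Ideal.span (truncSet 𝒜 d K r) := by
  rw [Ideal.span_le]
  rintro x (⟨i, hri, hxi, hxK⟩ | ⟨hxr, hxK, _⟩)
  · exact Ideal.subset_span (Or.inl ⟨i, by omega, hxi, hxK⟩)
  · exact Ideal.subset_span (Or.inl ⟨r + 1, by omega, hxr, hxK⟩)

theorem span_truncSet_eq_bot_of_forall_lt {D : ℕ} (hD : ∀ i : ℕ, D < i → 𝒜 i = ⊥)
    (hacy : ∀ (n : ℕ) (a : R), a ∈ K → a ∈ 𝒜 n → d a = 0 →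
      ∃ b, b ∈ K ∧ b ∈ 𝒜 (n + 1) ∧ d b = a) :
    Ideal.span (truncSet 𝒜 d K D) = ⊥ := by
  rw [Ideal.span_eq_bot]
  rintro x (⟨i, hDi, hxi, -⟩ | ⟨hxD, hxK, hdx⟩)
  · exact AddSubgroup.mem_bot.mp (hD i hDi ▸ hxi)
  · obtain ⟨b, -, hb, rfl⟩ := hacy D x hxK hxD hdx
    have hb0 : b = 0 := AddSubgroup.mem_bot.mp (hD (D + 1) D.lt_succ_self ▸ hb)
    rw [hb0, map_zero]

variable [GradedRing 𝒜] [DGRing R 𝒜 d]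

theorem span_truncSet_le_inf_goodTrunc (r : ℕ) :
    Ideal.span (truncSet 𝒜 d K r) ≤ K ⊓ goodTrunc 𝒜 d r := by
  rw [Ideal.span_le]
  rintro x (⟨i, hri, hxi, hxK⟩ | ⟨hxr, hxK, hdx⟩)
  · exact ⟨hxK, mem_goodTrunc_of_mem_of_le hxi hri.le fun h => absurd h hri.ne'⟩
  · exact ⟨hxK, mem_goodTrunc_of_mem_of_le hxr le_rfl fun _ => hdx⟩

theorem span_truncSet_zero (hK : K.IsHomogeneous 𝒜) : Ideal.span (truncSet 𝒜 d K 0) = K := by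
  classical
  refine le_antisymm (fun x hx => (span_truncSet_le_inf_goodTrunc 0 hx).1) fun x hx => ?_
  rw [← sum_support_decompose 𝒜 x]
  refine Ideal.sum_mem _ fun j _ => Ideal.subset_span ?_
  rcases Nat.eq_zero_or_pos j with rfl | hj
  · exact Or.inr ⟨SetLike.coe_mem _, hK 0 hx, DGRing.d_zero (d := d) _ (SetLike.coe_mem _)⟩
  · exact Or.inl ⟨j, hj, SetLike.coe_mem _, hK j hx⟩

theorem eq_zero_of_mem_span_truncSet_of_lt {r n : ℕ} {x : R}
    (hx : x ∈ Ideal.span (truncSet 𝒜 d K r)) (hxn : x ∈ 𝒜 n) (hnr : n < r) : x = 0 :=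
  eq_zero_of_mem_goodTrunc_of_lt (span_truncSet_le_inf_goodTrunc r hx).2 hxn hnr

theorem mem_span_truncSet_succ_of_lt {r n : ℕ} {x : R}
    (hx : x ∈ Ideal.span (truncSet 𝒜 d K r)) (hxn : x ∈ 𝒜 n) (hrn : r < n)
    (hdx : n = r + 1 → d x = 0) : x ∈ Ideal.span (truncSet 𝒜 d K (r + 1)) := by
  have hxK : x ∈ K := (span_truncSet_le_inf_goodTrunc r hx).1
  rcases (Nat.succ_le_of_lt hrn).eq_or_lt with rfl | hlt
  · exact Ideal.subset_span (Or.inr ⟨hxn, hxK, hdx rfl⟩)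
  · exact Ideal.subset_span (Or.inl ⟨n, hlt, hxn, hxK⟩)

theorem mem_span_truncSet_succ_of_ne {r n : ℕ} {x : R}
    (hx : x ∈ Ideal.span (truncSet 𝒜 d K r)) (hxn : x ∈ 𝒜 n) (hnr : n ≠ r)
    (hnr' : n ≠ r + 1) :
    x ∈ Ideal.span (truncSet 𝒜 d K (r + 1)) := by
  rcases hnr.lt_or_gt with hlt | hgt
  · rw [eq_zero_of_mem_span_truncSet_of_lt hx hxn hlt]
    exact zero_mem _
  · exact mem_span_truncSet_succ_of_lt hx hxn hgt fun h => absurd h hnr'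

theorem exists_sub_d_mem_span_truncSet_succ
    (hacy : ∀ (n : ℕ) (a : R), a ∈ K → a ∈ 𝒜 n → d a = 0 →
      ∃ b, b ∈ K ∧ b ∈ 𝒜 (n + 1) ∧ d b = a)
    {r n : ℕ} {x : R} (hx : x ∈ Ideal.span (truncSet 𝒜 d K r)) (hxn : x ∈ 𝒜 n)
    (hdx : d x ∈ Ideal.span (truncSet 𝒜 d K (r + 1))) :
    ∃ y, y ∈ Ideal.span (truncSet 𝒜 d K r) ∧ y ∈ 𝒜 (n + 1) ∧
      x - d y ∈ Ideal.span (truncSet 𝒜 d K (r + 1)) := by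
  rcases lt_trichotomy n r with hnr | rfl | hrn
  · refine ⟨0, zero_mem _, zero_mem _, ?_⟩
    rw [eq_zero_of_mem_span_truncSet_of_lt hx hxn hnr, map_zero, sub_zero]
    exact zero_mem _
  · obtain ⟨hxK, hx'⟩ := span_truncSet_le_inf_goodTrunc (K := K) n hx
    obtain ⟨b, hbK, hb, rfl⟩ := hacy n x hxK hxn (d_eq_zero_of_mem_goodTrunc hx' hxn)
    refine ⟨b, Ideal.subset_span (Or.inl ⟨n + 1, n.lt_succ_self, hb, hbK⟩), hb, ?_⟩
    rw [sub_self]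
    exact zero_mem _
  · refine ⟨0, zero_mem _, zero_mem _, ?_⟩
    rw [map_zero, sub_zero]
    refine mem_span_truncSet_succ_of_lt hx hxn hrn fun hn => ?_
    subst hn
    exact eq_zero_of_mem_span_truncSet_of_lt hdx (DGRing.d_mem r x hxn) r.lt_succ_self

end TruncationOfIdeal

theorem truncation_factorisation_bounded_general {R : Type*} [Ring R]
    (𝒜 : ℕ → AddSubgroup R) [GradedRing 𝒜] (d : R →+ R) [DGRing R 𝒜 d]
    (D : ℕ) (hbound : ∀ i : ℕ, D < i → 𝒜 i = ⊥)
    (K : Ideal R) (hhom : Ideal.IsHomogeneous 𝒜 K)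
    (hacy : ∀ (n : ℕ) (a : R), a ∈ K → a ∈ 𝒜 n → d a = 0 →
      ∃ b, b ∈ K ∧ b ∈ 𝒜 (n + 1) ∧ d b = a) :
    (Ideal.span (truncSet 𝒜 d K D) = ⊥) ∧
    (Ideal.span (truncSet 𝒜 d K 0) = K) ∧
    (∀ r : ℕ, Ideal.span (truncSet 𝒜 d K (r + 1)) ≤ Ideal.span (truncSet 𝒜 d K r)) ∧
    (∀ (r n : ℕ) (x : R), x ∈ Ideal.span (truncSet 𝒜 d K r) → x ∈ 𝒜 n →
      d x ∈ Ideal.span (truncSet 𝒜 d K (r + 1)) →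
      ∃ y, y ∈ Ideal.span (truncSet 𝒜 d K r) ∧ y ∈ 𝒜 (n + 1) ∧
        x - d y ∈ Ideal.span (truncSet 𝒜 d K (r + 1))) ∧
    (∀ r n : ℕ, n ≠ r → n ≠ r + 1 → ∀ x : R, x ∈ Ideal.span (truncSet 𝒜 d K r) →
      x ∈ 𝒜 n → x ∈ Ideal.span (truncSet 𝒜 d K (r + 1))) := by
  exact ⟨span_truncSet_eq_bot_of_forall_lt hbound hacy, span_truncSet_zero hhom,
    span_truncSet_succ_le, fun _ _ _ => exists_sub_d_mem_span_truncSet_succ hacy,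
    fun _ _ hnr hnr' _ hx hxn => mem_span_truncSet_succ_of_ne hx hxn hnr hnr'⟩

/-- If `A` is a non-negatively graded dg algebra concentrated in degrees `[0, D]` and
`K ⊆ A` is an acyclic dg ideal, then the surjective quasi-isomorphism `A → A/K` factors
as the finite composite `A = A/τ_{≥D}K → A/τ_{≥(D-1)}K → ⋯ → A/τ_{≥0}K = A/K` of
surjective quasi-isomorphisms, each of whose kernels is a two-term acyclic complex
concentrated in two adjacent degrees. -/
theorem truncation_factorisation_bounded {R : Type*} [Ring R]
    (𝒜 : ℕ → AddSubgroup R) [GradedRing 𝒜] (d : R →+ R) [DGRing R 𝒜 d]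
    (D : ℕ) (hbound : ∀ i : ℕ, D < i → 𝒜 i = ⊥)
    (K : Ideal R) (hhom : Ideal.IsHomogeneous 𝒜 K) (hdK : ∀ x ∈ K, d x ∈ K)
    (hacy : ∀ (n : ℕ) (a : R), a ∈ K → a ∈ 𝒜 n → d a = 0 →
      ∃ b, b ∈ K ∧ b ∈ 𝒜 (n + 1) ∧ d b = a) :
    (Ideal.span (truncSet 𝒜 d K D) = ⊥) ∧
    (Ideal.span (truncSet 𝒜 d K 0) = K) ∧
    (∀ r : ℕ, Ideal.span (truncSet 𝒜 d K (r + 1)) ≤ Ideal.span (truncSet 𝒜 d K r)) ∧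
    (∀ (r n : ℕ) (x : R), x ∈ Ideal.span (truncSet 𝒜 d K r) → x ∈ 𝒜 n →
      d x ∈ Ideal.span (truncSet 𝒜 d K (r + 1)) →
      ∃ y, y ∈ Ideal.span (truncSet 𝒜 d K r) ∧ y ∈ 𝒜 (n + 1) ∧
        x - d y ∈ Ideal.span (truncSet 𝒜 d K (r + 1))) ∧
    (∀ r n : ℕ, n ≠ r → n ≠ r + 1 → ∀ x : R, x ∈ Ideal.span (truncSet 𝒜 d K r) →
      x ∈ 𝒜 n → x ∈ Ideal.span (truncSet 𝒜 d K (r + 1))) :=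
  truncation_factorisation_bounded_general 𝒜 d D hbound K hhom hacy
end

section
/- Let S be a set of separably closed fields and R = ∏_{k ∈ S} k. Let f : R → B be an étale ring homomorphism such that the induced map Spec B → Spec R is surjective. Then f admits a retraction: there exists a ring homomorphism s : B → R with s ∘ f = id_R. (Proof sketch: each projection R → k lifts through B by surjectivity on spectra and separable closedness of k; these lifts assemble into a map B → ∏_{k∈S} k = R.) -/
/-!
An unramified algebra of finite type over a separably closed field `k` is a finite product of
copies of `k`, so as soon as it is nonzero it has a `k`-point. For a projection `π : ∏ K i → K i`,
surjectivity on spectra makes the fibre `K i ⊗ B` nonzero; its `K i`-point restricts to a lift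
`B → K i` of `π`, and these lifts assemble into a retraction `B → ∏ K i`.
-/

universe u

open TensorProduct

namespace Algebra

theorem nonempty_algHom_of_isSepClosed (k A : Type*) [Field k] [IsSepClosed k] [CommRing A]
    [Nontrivial A] [Algebra k A] [EssFiniteType k A] [FormallyUnramified k A] :
    Nonempty (A →ₐ[k] k) :=
  have := FormallyEtale.of_formallyUnramified_of_field k A
  let p : PrimeSpectrum A := Classical.arbitrary _
  ⟨(Pi.evalAlgHom k (fun _ ↦ k) p).comp (FormallyEtale.equivPiOfIsSepClosed k A).toAlgHom⟩

variable {R B : Type*} [CommRing R] [CommRing B] [Algebra R B]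

theorem TensorProduct.nontrivial_of_surjective_of_ker_le_comap {k : Type*} [CommRing k]
    [Algebra R k] (hk : Function.Surjective (algebraMap R k)) (q : Ideal B) [q.IsPrime]
    (hq : RingHom.ker (algebraMap R k) ≤ q.comap (algebraMap R B)) :
    Nontrivial (k ⊗[R] B) := by
  let g : k →+* B ⧸ q := RingHom.liftOfSurjective _ hk
    ⟨(Ideal.Quotient.mk q).comp (algebraMap R B), fun _ hr ↦
      RingHom.mem_ker.mpr (Ideal.Quotient.eq_zero_iff_mem.mpr (hq hr))⟩
  let gₐ : k →ₐ[R] B ⧸ q :=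
    { g with commutes' := RingHom.liftOfSurjective_comp_apply _ hk _ }
  exact RingHom.domain_nontrivial
    (TensorProduct.lift gₐ (Ideal.Quotient.mkₐ R q) fun _ _ ↦ Commute.all _ _).toRingHom

theorem nonempty_algHom_of_surjective_of_isSepClosed {k : Type*} [Field k] [IsSepClosed k]
    [Algebra R k] [FormallyUnramified R B] [FiniteType R B]
    (hk : Function.Surjective (algebraMap R k)) (q : Ideal B) [q.IsPrime]
    (hq : RingHom.ker (algebraMap R k) ≤ q.comap (algebraMap R B)) :
    Nonempty (B →ₐ[R] k) :=
  have := TensorProduct.nontrivial_of_surjective_of_ker_le_comap hk q hq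
  let ψ := (nonempty_algHom_of_isSepClosed k (k ⊗[R] B)).some
  ⟨(ψ.restrictScalars R).comp TensorProduct.includeRight⟩

end Algebra

/-- Let `R = ∏_{i} K i` be a product of separably closed fields and `B` an étale `R`-algebra
such that `Spec B → Spec R` is surjective. Then the structure map `R → B` admits a
retraction, i.e. there is an `R`-algebra homomorphism `B → R`. -/
theorem etale_cover_of_product_of_sepClosed_fields_has_section
    {ι : Type u} (K : ι → Type u) [∀ i, Field (K i)] [∀ i, IsSepClosed (K i)]
    (B : Type u) [CommRing B] [Algebra (∀ i, K i) B] [Algebra.Etale (∀ i, K i) B]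
    (hsurj : Function.Surjective (PrimeSpectrum.comap (algebraMap (∀ i, K i) B))) :
    ∃ s : B →ₐ[∀ i, K i] (∀ i, K i),
      (s : B →+* (∀ i, K i)).comp (algebraMap (∀ i, K i) B) = RingHom.id (∀ i, K i) := by
  let _ (i : ι) : Algebra (∀ j, K j) (K i) := (Pi.evalRingHom K i).toAlgebra
  have lift (i : ι) : Nonempty (B →ₐ[∀ j, K j] K i) := by
    obtain ⟨q, hq⟩ := hsurj ⟨RingHom.ker (Pi.evalRingHom K i), RingHom.ker_isPrime _⟩
    exact Algebra.nonempty_algHom_of_surjective_of_isSepClosed (Function.surjective_eval i)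
      q.asIdeal (by rw [← PrimeSpectrum.comap_asIdeal, hq]; rfl)
  let g : B →+* ∀ i, K i := RingHom.pi fun i ↦ ((lift i).some : B →+* K i)
  have hg : g.comp (algebraMap _ B) = RingHom.id _ :=
    RingHom.ext fun r ↦ funext fun i ↦ (lift i).some.commutes r
  exact ⟨⟨g, RingHom.congr_fun hg⟩, hg⟩
end

section
/- Let f : A → B be a surjective quasi-isomorphism of non-negatively graded dg commutative algebras such that A_i = 0 for all i sufficiently large, and such that the kernel I_A = ker(A → H₀A) is nilpotent. Then f factors as a finite composition of tiny acyclic extensions, i.e. surjective quasi-isomorphisms whose kernel is an H₀A-module of the form cone(M)[−r] (the shifted cone on an H₀-module M, a two-term complex M = M in degrees r+1 and r with identity differential) annihilated by I_A. -/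
/-!
Filter the acyclic dg ideal `K` by its good truncations `τ_{≥r} K`, which run from `K` at `r = 0`
down to `0` above the top degree; acyclicity makes each layer `τ_{≥r} K / τ_{≥r+1} K` a cone
concentrated in degrees `r` and `r + 1`. Refine each layer by the ideals
`τ_{≥r+1} K + I^s · τ_{≥r} K`, `s = 0, …, m`, which reach `τ_{≥r+1} K` because `I^m = 0`. The
refined layers are killed by `I` by construction, and they are still cones: the degree-`r` part of
`I^s · τ_{≥r} K` is `(I^s)₀ · Z_r K = d((I^s)₀ · K_{r+1})`, since `d` vanishes in degree `0`.
-/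

open DirectSum

section GradedRing

variable {σ A : Type*} [Semiring A] [SetLike σ A] [AddSubmonoidClass σ A]

theorem Ideal.IsHomogeneous.mul_of_isTwoSided {ι : Type*} [DecidableEq ι] [AddMonoid ι]
    (𝒜 : ι → σ) [GradedRing 𝒜] {I J : Ideal A} [I.IsTwoSided] (hI : I.IsHomogeneous 𝒜) (hJ : J.IsHomogeneous 𝒜) :
    (I * J).IsHomogeneous 𝒜 := by
  rw [Ideal.IsHomogeneous.iff_exists] at hI hJ
  obtain ⟨⟨S, rfl⟩, ⟨T, rfl⟩⟩ := hI, hJ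
  rw [Ideal.span_mul_span']
  refine Ideal.homogeneous_span 𝒜 _ ?_
  rintro _ ⟨_, ⟨s, -, rfl⟩, _, ⟨t, -, rfl⟩, rfl⟩
  exact s.2.mul t.2

theorem DirectSum.decompose_eq_zero_of_mem_span_of_lt (𝒜 : ℕ → σ) [GradedRing 𝒜] {S : Set A}
    {q : ℕ} (hS : ∀ s ∈ S, ∃ i, q ≤ i ∧ s ∈ 𝒜 i) {x : A} (hx : x ∈ Ideal.span S) {n : ℕ}
    (hn : n < q) : (decompose 𝒜 x n : A) = 0 := by
  induction hx using Submodule.span_induction generalizing n with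
  | mem s hs =>
    obtain ⟨i, hqi, hsi⟩ := hS s hs
    exact decompose_of_mem_ne 𝒜 hsi (by omega)
  | zero => simp
  | add x y _ _ hx hy => simp [hx hn, hy hn]
  | smul c x _ hx =>
    rw [smul_eq_mul]
    induction c using DirectSum.Decomposition.inductionOn 𝒜 with
    | zero => simp
    | @homogeneous i c =>
      by_cases hin : i ≤ n
      · rw [coe_decompose_mul_of_left_mem_of_le 𝒜 c.2 hin, hx (by omega), mul_zero]
      · exact coe_decompose_mul_of_left_mem_of_not_le 𝒜 c.2 hin
    | add c c' hc hc' =>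
      rw [add_mul, decompose_add, DirectSum.add_apply, AddMemClass.coe_add, hc, hc', add_zero]

end GradedRing

theorem Relation.ReflTransGen.exists_seq {α : Type*} {r : α → α → Prop} {a b : α}
    (h : Relation.ReflTransGen r a b) :
    ∃ (t : ℕ) (f : ℕ → α), f 0 = a ∧ f t = b ∧ ∀ i < t, r (f i) (f (i + 1)) := by
  induction h with
  | refl => exact ⟨0, fun _ => a, rfl, rfl, fun i hi => absurd hi i.not_lt_zero⟩
  | @tail b c _ hbc ih =>
    obtain ⟨t, f, hf0, hft, hf⟩ := ih
    refine ⟨t + 1, Function.update f (t + 1) c, by simp [hf0], by simp, fun i hi => ?_⟩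
    rw [Function.update_of_ne (by omega)]
    rcases (Nat.lt_succ_iff.1 hi).lt_or_eq with hi | rfl
    · rw [Function.update_of_ne (by omega)]; exact hf i hi
    · rw [Function.update_self, hft]; exact hbc

namespace DGRing

variable {R : Type*} [Ring R] (𝒜 : ℕ → AddSubgroup R) (d : R →+ R)

section Leibniz

variable [GradedRing 𝒜] [DGRing R 𝒜 d]

include d in
theorem isTwoSided_of_isHomogeneous {I : Ideal R} (hI : I.IsHomogeneous 𝒜) : I.IsTwoSided := by
  classical
  refine ⟨fun {a} b ha => ?_⟩
  rw [← sum_support_decompose 𝒜 a, Finset.sum_mul]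
  refine sum_mem fun i _ => ?_
  induction b using DirectSum.Decomposition.inductionOn 𝒜 with
  | zero => simp
  | @homogeneous j b =>
    rw [gcomm (d := d) i j _ _ (SetLike.coe_mem _) b.2]
    exact Submodule.smul_of_tower_mem _ _ (I.mul_mem_left _ (hI i ha))
  | add b b' hb hb' => rw [mul_add]; exact add_mem hb hb'

theorem d_mul_of_mem_left {i : ℕ} {a : R} (ha : a ∈ 𝒜 i) (b : R) :
    d (a * b) = d a * b + ((-1 : ℤ) ^ i) • (a * d b) := by
  induction b using DirectSum.Decomposition.inductionOn 𝒜 with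
  | zero => simp
  | @homogeneous j b => exact leibniz i j a b ha b.2
  | add b b' hb hb' => simp only [mul_add, map_add, hb, hb', smul_add]; abel

include 𝒜 in
theorem d_mem_span {S : Set R} (hS : ∀ s ∈ S, d s ∈ Ideal.span S) {x : R}
    (hx : x ∈ Ideal.span S) : d x ∈ Ideal.span S := by
  induction hx using Submodule.span_induction with
  | mem s hs => exact hS s hs
  | zero => simp
  | add x y _ _ hx hy => rw [map_add]; exact add_mem hx hy
  | smul c x hx' hx =>
    rw [smul_eq_mul]
    induction c using DirectSum.Decomposition.inductionOn 𝒜 with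
    | zero => simp
    | homogeneous c =>
      rw [d_mul_of_mem_left 𝒜 d c.2]
      exact add_mem (Ideal.mul_mem_left _ _ hx')
        (Submodule.smul_of_tower_mem _ _ (Ideal.mul_mem_left _ _ hx))
    | add c c' hc hc' => rw [add_mul, map_add]; exact add_mem hc hc'

theorem d_mem_mul {I J : Ideal R} (hI : I.IsHomogeneous 𝒜) (hdI : ∀ x ∈ I, d x ∈ I)
    (hdJ : ∀ x ∈ J, d x ∈ J) {x : R} (hx : x ∈ I * J) : d x ∈ I * J := by
  classical
  refine Submodule.mul_induction_on hx (fun a ha b hb => ?_)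
    (fun x y hx hy => by rw [map_add]; exact add_mem hx hy)
  rw [← sum_support_decompose 𝒜 a, Finset.sum_mul, map_sum]
  refine sum_mem fun i _ => ?_
  rw [d_mul_of_mem_left 𝒜 d (SetLike.coe_mem _)]
  exact add_mem (Ideal.mul_mem_mul (hdI _ (hI i ha)) hb)
    (Submodule.smul_of_tower_mem _ _ (Ideal.mul_mem_mul (hI i ha) (hdJ b hb)))

include d in
theorem isHomogeneous_pow {I : Ideal R} (hI : I.IsHomogeneous 𝒜) (s : ℕ) :
    (I ^ s).IsHomogeneous 𝒜 := by
  induction s with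
  | zero => rw [Submodule.pow_zero, Ideal.one_eq_top]; exact Ideal.IsHomogeneous.top 𝒜
  | succ s ih =>
    have := isTwoSided_of_isHomogeneous 𝒜 d ih
    exact ih.mul_of_isTwoSided 𝒜 hI

theorem d_mem_pow {I : Ideal R} (hI : I.IsHomogeneous 𝒜) (hdI : ∀ x ∈ I, d x ∈ I) (s : ℕ)
    {x : R} (hx : x ∈ I ^ s) : d x ∈ I ^ s := by
  induction s generalizing x with
  | zero => rw [Submodule.pow_zero, Ideal.one_eq_top] at hx ⊢; trivial
  | succ s ih => exact d_mem_mul 𝒜 d (isHomogeneous_pow 𝒜 d hI s) (fun _ => ih) hdI hx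

end Leibniz

/-- `I_A = ker(A → H₀A) = A_{>0} + d(A₁)`. -/
def augmentationIdeal : Ideal R :=
  Ideal.span {a : R | (∃ n : ℕ, a ∈ 𝒜 (n + 1)) ∨ ∃ b ∈ 𝒜 1, d b = a}

theorem augmentationIdeal_isHomogeneous [GradedRing 𝒜] [DGRing R 𝒜 d] :
    (augmentationIdeal 𝒜 d).IsHomogeneous 𝒜 :=
  Ideal.homogeneous_span 𝒜 _ fun a ha => by
    rcases ha with ⟨n, ha⟩ | ⟨b, hb, rfl⟩
    exacts [⟨n + 1, ha⟩, ⟨0, d_mem 0 b hb⟩]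

theorem d_mem_augmentationIdeal [GradedRing 𝒜] [DGRing R 𝒜 d] {x : R}
    (hx : x ∈ augmentationIdeal 𝒜 d) : d x ∈ augmentationIdeal 𝒜 d := by
  refine d_mem_span 𝒜 d (fun a ha => Ideal.subset_span ?_) hx
  rcases ha with ⟨_ | n, ha⟩ | ⟨b, -, rfl⟩
  · exact Or.inr ⟨a, ha, rfl⟩
  · exact Or.inl ⟨n, d_mem (n + 1) a ha⟩
  · exact Or.inl ⟨0, by rw [d_d (𝒜 := 𝒜) b]; exact zero_mem _⟩

variable (K : Ideal R)

abbrev goodTrunc (r : ℕ) : Ideal R := Ideal.span (truncSet 𝒜 d K r)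

variable {𝒜 d K} in
theorem mem_goodTrunc_of_lt {r i : ℕ} (hri : r < i) {x : R} (hx : x ∈ 𝒜 i) (hxK : x ∈ K) :
    x ∈ goodTrunc 𝒜 d K r :=
  Ideal.subset_span (Or.inl ⟨i, hri, hx, hxK⟩)

variable {𝒜 d K} in
theorem mem_goodTrunc_of_d_eq_zero {r : ℕ} {x : R} (hx : x ∈ 𝒜 r) (hxK : x ∈ K) (hdx : d x = 0) :
    x ∈ goodTrunc 𝒜 d K r :=
  Ideal.subset_span (Or.inr ⟨hx, hxK, hdx⟩)

theorem goodTrunc_isHomogeneous [GradedRing 𝒜] (r : ℕ) : (goodTrunc 𝒜 d K r).IsHomogeneous 𝒜 :=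
  Ideal.homogeneous_span 𝒜 _ fun x hx => by
    rcases hx with ⟨i, -, hx, -⟩ | ⟨hx, -, -⟩
    exacts [⟨i, hx⟩, ⟨r, hx⟩]

theorem goodTrunc_le (r : ℕ) : goodTrunc 𝒜 d K r ≤ K :=
  Ideal.span_le.2 fun x hx => by rcases hx with ⟨-, -, -, hxK⟩ | ⟨-, hxK, -⟩ <;> exact hxK

theorem goodTrunc_succ_le (r : ℕ) : goodTrunc 𝒜 d K (r + 1) ≤ goodTrunc 𝒜 d K r :=
  Ideal.span_le.2 fun x hx => by
    rcases hx with ⟨i, hri, hx, hxK⟩ | ⟨hx, hxK, -⟩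
    exacts [mem_goodTrunc_of_lt (by omega) hx hxK, mem_goodTrunc_of_lt r.lt_succ_self hx hxK]

theorem d_mem_goodTrunc [GradedRing 𝒜] [DGRing R 𝒜 d] (hdK : ∀ x ∈ K, d x ∈ K) (r : ℕ) {x : R}
    (hx : x ∈ goodTrunc 𝒜 d K r) : d x ∈ goodTrunc 𝒜 d K r := by
  refine d_mem_span 𝒜 d (fun x hx => ?_) hx
  rcases hx with ⟨_ | i, hri, hx, hxK⟩ | ⟨-, -, hdx⟩
  · omega
  · rcases (Nat.lt_succ_iff.1 hri).lt_or_eq with hri | rfl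
    · exact mem_goodTrunc_of_lt hri (d_mem i x hx) (hdK x hxK)
    · exact mem_goodTrunc_of_d_eq_zero (d_mem r x hx) (hdK x hxK) (d_d (𝒜 := 𝒜) x)
  · rw [hdx]; exact zero_mem _

theorem decompose_eq_zero_of_mem_goodTrunc [GradedRing 𝒜] {r n : ℕ} (hn : n < r) {x : R}
    (hx : x ∈ goodTrunc 𝒜 d K r) : (decompose 𝒜 x n : R) = 0 := by
  refine decompose_eq_zero_of_mem_span_of_lt 𝒜 (fun x hx => ?_) hx hn
  rcases hx with ⟨i, hri, hx, -⟩ | ⟨hx, -, -⟩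
  exacts [⟨i, hri.le, hx⟩, ⟨r, le_rfl, hx⟩]

theorem goodTrunc_zero [GradedRing 𝒜] [DGRing R 𝒜 d] (hK : K.IsHomogeneous 𝒜) :
    goodTrunc 𝒜 d K 0 = K := by
  refine le_antisymm (goodTrunc_le 𝒜 d K 0) (hK.toIdeal_homogeneousCore_eq_self.ge.trans ?_)
  refine Ideal.span_le.2 ?_
  rintro _ ⟨⟨x, _ | i, hx⟩, hxK, rfl⟩
  exacts [mem_goodTrunc_of_d_eq_zero hx hxK (d_zero x hx), mem_goodTrunc_of_lt i.succ_pos hx hxK]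

theorem goodTrunc_eq_bot {D : ℕ} (hbound : ∀ i : ℕ, D < i → 𝒜 i = ⊥) {q : ℕ} (hq : D < q) :
    goodTrunc 𝒜 d K q = ⊥ := by
  refine le_bot_iff.1 (Ideal.span_le.2 fun x hx => ?_)
  obtain ⟨i, hqi, hx⟩ : ∃ i, q ≤ i ∧ x ∈ 𝒜 i := by
    rcases hx with ⟨i, hqi, hx, -⟩ | ⟨hx, -, -⟩
    exacts [⟨i, hqi.le, hx⟩, ⟨q, le_rfl, hx⟩]
  rw [hbound i (by omega)] at hx
  exact (AddSubgroup.mem_bot.1 hx).symm ▸ zero_mem _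

variable (I : Ideal R)

abbrev goodTruncPow (r s : ℕ) : Ideal R := goodTrunc 𝒜 d K (r + 1) ⊔ I ^ s * goodTrunc 𝒜 d K r

/-- `R ⧸ J' → R ⧸ J` is a tiny acyclic extension: its kernel `J / J'` is `cone(M)[-r]` for some
`r` (concentrated in degrees `r, r + 1`, with bijective differential) and is killed by `I`. -/
def IsTinyAcyclicExtension [GradedRing 𝒜] (J J' : Ideal R) : Prop :=
  J' ≤ J ∧ J.IsHomogeneous 𝒜 ∧ (∀ x ∈ J, d x ∈ J) ∧
    ∃ r : ℕ,
      (∀ n : ℕ, n ≠ r → n ≠ r + 1 → ∀ x : R, x ∈ J → x ∈ 𝒜 n → x ∈ J') ∧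
      (∀ x : R, x ∈ J → x ∈ 𝒜 r → ∃ y, y ∈ J ∧ y ∈ 𝒜 (r + 1) ∧ x - d y ∈ J') ∧
      (∀ y : R, y ∈ J → y ∈ 𝒜 (r + 1) → d y ∈ J' → y ∈ J') ∧
      (∀ a x : R, a ∈ I → x ∈ J → a * x ∈ J')

theorem goodTruncPow_zero (r : ℕ) : goodTruncPow 𝒜 d K I r 0 = goodTrunc 𝒜 d K r := by
  rw [goodTruncPow, Submodule.pow_zero, Ideal.one_eq_top, Ideal.top_mul,
    sup_eq_right.2 (goodTrunc_succ_le 𝒜 d K r)]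

theorem goodTruncPow_of_pow_eq_bot {m : ℕ} (hI : I ^ m = ⊥) (r : ℕ) :
    goodTruncPow 𝒜 d K I r m = goodTrunc 𝒜 d K (r + 1) := by
  rw [goodTruncPow, hI, Ideal.bot_mul, sup_bot_eq]

theorem goodTruncPow_le (r s : ℕ) : goodTruncPow 𝒜 d K I r s ≤ goodTrunc 𝒜 d K r :=
  sup_le (goodTrunc_succ_le 𝒜 d K r) Ideal.mul_le_right

theorem goodTruncPow_succ_le (r s : ℕ) :
    goodTruncPow 𝒜 d K I r (s + 1) ≤ goodTruncPow 𝒜 d K I r s := by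
  refine sup_le_sup_left ?_ _
  rw [Submodule.pow_succ, Ideal.mul_assoc]
  exact Ideal.mul_mono_right Ideal.mul_le_right

variable [GradedRing 𝒜] {I}

theorem mem_goodTruncPow_succ_of_ne {r n : ℕ} (hnr : n ≠ r) (hnr' : n ≠ r + 1) (s : ℕ) {x : R}
    (hx : x ∈ goodTruncPow 𝒜 d K I r s) (hxn : x ∈ 𝒜 n) : x ∈ goodTruncPow 𝒜 d K I r (s + 1) := by
  have hxr := goodTruncPow_le 𝒜 d K I r s hx
  rcases Nat.lt_or_gt_of_ne hnr with hn | hn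
  · rw [← decompose_of_mem_same 𝒜 hxn, decompose_eq_zero_of_mem_goodTrunc 𝒜 d K hn hxr]
    exact zero_mem _
  · exact Ideal.mem_sup_left (mem_goodTrunc_of_lt (by omega) hxn (goodTrunc_le 𝒜 d K r hxr))

variable [DGRing R 𝒜 d]

theorem goodTruncPow_isHomogeneous (hI : I.IsHomogeneous 𝒜) (r s : ℕ) :
    (goodTruncPow 𝒜 d K I r s).IsHomogeneous 𝒜 :=
  have := isTwoSided_of_isHomogeneous 𝒜 d (isHomogeneous_pow 𝒜 d hI s)
  (goodTrunc_isHomogeneous 𝒜 d K _).sup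
    ((isHomogeneous_pow 𝒜 d hI s).mul_of_isTwoSided 𝒜 (goodTrunc_isHomogeneous 𝒜 d K r))

theorem d_mem_goodTruncPow (hI : I.IsHomogeneous 𝒜) (hdI : ∀ x ∈ I, d x ∈ I)
    (hdK : ∀ x ∈ K, d x ∈ K) (r s : ℕ) {x : R} (hx : x ∈ goodTruncPow 𝒜 d K I r s) :
    d x ∈ goodTruncPow 𝒜 d K I r s := by
  obtain ⟨u, hu, v, hv, rfl⟩ := Submodule.mem_sup.1 hx
  rw [map_add]
  exact add_mem (Ideal.mem_sup_left (d_mem_goodTrunc 𝒜 d K hdK _ hu))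
    (Ideal.mem_sup_right (d_mem_mul 𝒜 d (isHomogeneous_pow 𝒜 d hI s)
      (fun _ => d_mem_pow 𝒜 d hI hdI s) (fun _ => d_mem_goodTrunc 𝒜 d K hdK r) hv))

theorem mul_mem_goodTruncPow_succ (hI : I.IsHomogeneous 𝒜) (r s : ℕ) {a x : R} (ha : a ∈ I)
    (hx : x ∈ goodTruncPow 𝒜 d K I r s) : a * x ∈ goodTruncPow 𝒜 d K I r (s + 1) := by
  have := isTwoSided_of_isHomogeneous 𝒜 d hI
  obtain ⟨u, hu, v, hv, rfl⟩ := Submodule.mem_sup.1 hx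
  rw [mul_add, goodTruncPow, Ideal.IsTwoSided.pow_succ, Ideal.mul_assoc]
  exact add_mem (Ideal.mem_sup_left (Ideal.mul_mem_left _ a hu))
    (Ideal.mem_sup_right (Ideal.mul_mem_mul ha hv))

section Acyclic

variable (hacy : ∀ (n : ℕ) (a : R), a ∈ K → a ∈ 𝒜 n → d a = 0 →
  ∃ b, b ∈ K ∧ b ∈ 𝒜 (n + 1) ∧ d b = a)
include hacy

theorem decompose_mul_mem_map_d_of_mem_truncSet {L : Ideal R} (hL : L.IsHomogeneous 𝒜)
    {r : ℕ} {a g : R} (ha : a ∈ L) (hg : g ∈ truncSet 𝒜 d K r) :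
    (decompose 𝒜 (a * g) r : R) ∈ ((L * goodTrunc 𝒜 d K r).toAddSubgroup ⊓ 𝒜 (r + 1)).map d := by
  rcases hg with ⟨i, hri, hgi, -⟩ | ⟨hgr, hgK, hdg⟩
  · rw [coe_decompose_mul_of_right_mem_of_not_le 𝒜 hgi (by omega)]
    exact zero_mem _
  · -- the degree-`r` part of `a * g` is `a₀ * g = a₀ * d b = d (a₀ * b)`, as `d a₀ = 0`
    obtain ⟨b, hbK, hb, rfl⟩ := hacy r g hgK hgr hdg
    have ha₀ : (decompose 𝒜 a 0 : R) ∈ 𝒜 0 := SetLike.coe_mem _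
    refine AddSubgroup.mem_map.2 ⟨decompose 𝒜 a 0 * b,
      ⟨Ideal.mul_mem_mul (hL 0 ha) (mem_goodTrunc_of_lt r.lt_succ_self hb hbK),
        by simpa using SetLike.mul_mem_graded ha₀ hb⟩, ?_⟩
    rw [coe_decompose_mul_of_right_mem_of_le 𝒜 hgr le_rfl, Nat.sub_self,
      d_mul_of_mem_left 𝒜 d ha₀, d_zero _ ha₀, zero_mul, zero_add, pow_zero, one_smul]

theorem decompose_mem_map_d_of_mem_mul_goodTrunc {L : Ideal R} (hL : L.IsHomogeneous 𝒜)
    {r : ℕ} {v : R} (hv : v ∈ L * goodTrunc 𝒜 d K r) :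
    (decompose 𝒜 v r : R) ∈ ((L * goodTrunc 𝒜 d K r).toAddSubgroup ⊓ 𝒜 (r + 1)).map d := by
  have := isTwoSided_of_isHomogeneous 𝒜 d hL
  suffices ∀ g ∈ goodTrunc 𝒜 d K r, ∀ a ∈ L,
      (decompose 𝒜 (a * g) r : R) ∈ ((L * goodTrunc 𝒜 d K r).toAddSubgroup ⊓ 𝒜 (r + 1)).map d from
    Submodule.mul_induction_on hv (fun a ha g hg => this g hg a ha) fun x y hx hy => by
      rw [decompose_add, DirectSum.add_apply, AddMemClass.coe_add]; exact add_mem hx hy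
  intro g hg
  induction hg using Submodule.span_induction with
  | mem g hg => exact fun a ha => decompose_mul_mem_map_d_of_mem_truncSet 𝒜 d K hacy hL ha hg
  | zero => simp
  | add g g' _ _ hg hg' =>
    intro a ha
    rw [mul_add, decompose_add, DirectSum.add_apply, AddMemClass.coe_add]
    exact add_mem (hg a ha) (hg' a ha)
  | smul c g _ hg =>
    intro a ha
    rw [smul_eq_mul, ← mul_assoc]
    exact hg _ (L.mul_mem_right c ha)

theorem exists_d_eq_of_mem_goodTruncPow (hI : I.IsHomogeneous 𝒜) {r s : ℕ} {x : R}
    (hx : x ∈ goodTruncPow 𝒜 d K I r s) (hxr : x ∈ 𝒜 r) :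
    ∃ y ∈ I ^ s * goodTrunc 𝒜 d K r, y ∈ 𝒜 (r + 1) ∧ d y = x := by
  obtain ⟨u, hu, v, hv, rfl⟩ := Submodule.mem_sup.1 hx
  obtain ⟨y, ⟨hy, hyr⟩, hdy⟩ := AddSubgroup.mem_map.1
    (decompose_mem_map_d_of_mem_mul_goodTrunc 𝒜 d K hacy (isHomogeneous_pow 𝒜 d hI s) hv)
  refine ⟨y, hy, hyr, ?_⟩
  rw [hdy, ← decompose_of_mem_same 𝒜 hxr, decompose_add, DirectSum.add_apply,
    AddMemClass.coe_add, decompose_eq_zero_of_mem_goodTrunc 𝒜 d K r.lt_succ_self hu, zero_add]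

theorem exists_sub_d_mem_goodTruncPow_succ (hI : I.IsHomogeneous 𝒜) {r s : ℕ} {x : R}
    (hx : x ∈ goodTruncPow 𝒜 d K I r s) (hxr : x ∈ 𝒜 r) :
    ∃ y ∈ goodTruncPow 𝒜 d K I r s, y ∈ 𝒜 (r + 1) ∧ x - d y ∈ goodTruncPow 𝒜 d K I r (s + 1) := by
  obtain ⟨y, hy, hyr, rfl⟩ := exists_d_eq_of_mem_goodTruncPow 𝒜 d K hacy hI hx hxr
  exact ⟨y, Ideal.mem_sup_right hy, hyr, by rw [sub_self]; exact zero_mem _⟩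

theorem mem_goodTruncPow_succ_of_d_mem (hI : I.IsHomogeneous 𝒜) {r s : ℕ} {y : R}
    (hy : y ∈ goodTruncPow 𝒜 d K I r s) (hyr : y ∈ 𝒜 (r + 1))
    (hdy : d y ∈ goodTruncPow 𝒜 d K I r (s + 1)) : y ∈ goodTruncPow 𝒜 d K I r (s + 1) := by
  obtain ⟨b, hb, hbr, hdb⟩ := exists_d_eq_of_mem_goodTruncPow 𝒜 d K hacy hI hdy (d_mem r y hyr)
  have hbK : b ∈ K := goodTrunc_le 𝒜 d K r (Ideal.mul_le_right hb)
  have hyK : y ∈ K := goodTrunc_le 𝒜 d K r (goodTruncPow_le 𝒜 d K I r s hy)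
  have hyb : y - b ∈ goodTrunc 𝒜 d K (r + 1) :=
    mem_goodTrunc_of_d_eq_zero (sub_mem hyr hbr) (sub_mem hyK hbK) (by rw [map_sub, hdb, sub_self])
  rw [← sub_add_cancel y b]
  exact add_mem (Ideal.mem_sup_left hyb) (Ideal.mem_sup_right hb)

theorem isTinyAcyclicExtension_goodTruncPow (hI : I.IsHomogeneous 𝒜) (hdI : ∀ x ∈ I, d x ∈ I)
    (hdK : ∀ x ∈ K, d x ∈ K) (r s : ℕ) :
    IsTinyAcyclicExtension 𝒜 d I (goodTruncPow 𝒜 d K I r s) (goodTruncPow 𝒜 d K I r (s + 1)) :=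
  ⟨goodTruncPow_succ_le 𝒜 d K I r s, goodTruncPow_isHomogeneous 𝒜 d K hI r s,
    fun _ => d_mem_goodTruncPow 𝒜 d K hI hdI hdK r s, r,
    fun _ hnr hnr' _ hx hxn => mem_goodTruncPow_succ_of_ne 𝒜 d K hnr hnr' s hx hxn,
    fun _ hx hxr => exists_sub_d_mem_goodTruncPow_succ 𝒜 d K hacy hI hx hxr,
    fun _ hy hyr hdy => mem_goodTruncPow_succ_of_d_mem 𝒜 d K hacy hI hy hyr hdy,
    fun _ _ ha hx => mul_mem_goodTruncPow_succ 𝒜 d K hI r s ha hx⟩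

theorem reflTransGen_isTinyAcyclicExtension (hI : I.IsHomogeneous 𝒜) (hdI : ∀ x ∈ I, d x ∈ I)
    {m : ℕ} (hnil : I ^ m = ⊥) {D : ℕ} (hbound : ∀ i : ℕ, D < i → 𝒜 i = ⊥)
    (hK : K.IsHomogeneous 𝒜) (hdK : ∀ x ∈ K, d x ∈ K) :
    Relation.ReflTransGen (IsTinyAcyclicExtension 𝒜 d I) K ⊥ := by
  have hpow (r s : ℕ) : Relation.ReflTransGen (IsTinyAcyclicExtension 𝒜 d I)
      (goodTrunc 𝒜 d K r) (goodTruncPow 𝒜 d K I r s) := by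
    induction s with
    | zero => rw [goodTruncPow_zero]
    | succ s ih => exact ih.tail (isTinyAcyclicExtension_goodTruncPow 𝒜 d K hacy hI hdI hdK r s)
  have htrunc (q : ℕ) : Relation.ReflTransGen (IsTinyAcyclicExtension 𝒜 d I)
      (goodTrunc 𝒜 d K 0) (goodTrunc 𝒜 d K q) := by
    induction q with
    | zero => rfl
    | succ q ih => exact ih.trans (goodTruncPow_of_pow_eq_bot 𝒜 d K I hnil q ▸ hpow q m)
  rw [← goodTrunc_zero 𝒜 d K hK, ← goodTrunc_eq_bot 𝒜 d K hbound D.lt_succ_self]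
  exact htrunc (D + 1)

end Acyclic

end DGRing

/-- Lemma `wtiny`: if `A` is a bounded non-negatively graded dg algebra whose augmentation
ideal `I_A = ker(A → H₀A)` is nilpotent, then any surjective quasi-isomorphism `A → B`
(with kernel the acyclic dg ideal `K`) factors as a finite composition of tiny acyclic
extensions: there is a finite decreasing chain of dg ideals from `K` to `0` such that each
successive quotient is concentrated in two adjacent degrees `r, r+1`, has bijective
differential (i.e. is of the form `cone(M)[-r]`), and is annihilated by `I_A`. -/
theorem surjective_quasiIso_factors_into_tiny_acyclic_extensions {R : Type*} [Ring R]
    (𝒜 : ℕ → AddSubgroup R) [GradedRing 𝒜] (d : R →+ R) [DGRing R 𝒜 d]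
    (IA : Ideal R)
    (hIA : IA = Ideal.span {a : R | (∃ n : ℕ, a ∈ 𝒜 (n + 1)) ∨ ∃ b ∈ 𝒜 1, d b = a})
    (m : ℕ) (hnil : IA ^ m = ⊥)
    (D : ℕ) (hbound : ∀ i : ℕ, D < i → 𝒜 i = ⊥)
    (K : Ideal R) (hhom : Ideal.IsHomogeneous 𝒜 K) (hdK : ∀ x ∈ K, d x ∈ K)
    (hacy : ∀ (n : ℕ) (a : R), a ∈ K → a ∈ 𝒜 n → d a = 0 →
      ∃ b, b ∈ K ∧ b ∈ 𝒜 (n + 1) ∧ d b = a) :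
    ∃ (t : ℕ) (J : ℕ → Ideal R), J 0 = K ∧ J t = ⊥ ∧
      ∀ i : ℕ, i < t →
        (J (i + 1) ≤ J i) ∧
        Ideal.IsHomogeneous 𝒜 (J i) ∧ (∀ x ∈ J i, d x ∈ J i) ∧
        ∃ r : ℕ,
          (∀ n : ℕ, n ≠ r → n ≠ r + 1 → ∀ x : R, x ∈ J i → x ∈ 𝒜 n → x ∈ J (i + 1)) ∧
          (∀ x : R, x ∈ J i → x ∈ 𝒜 r →
            ∃ y, y ∈ J i ∧ y ∈ 𝒜 (r + 1) ∧ x - d y ∈ J (i + 1)) ∧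
          (∀ y : R, y ∈ J i → y ∈ 𝒜 (r + 1) → d y ∈ J (i + 1) → y ∈ J (i + 1)) ∧
          (∀ a x : R, a ∈ IA → x ∈ J i → a * x ∈ J (i + 1)) := by
  subst hIA
  exact (DGRing.reflTransGen_isTinyAcyclicExtension 𝒜 d K hacy
    (DGRing.augmentationIdeal_isHomogeneous 𝒜 d) (fun _ => DGRing.d_mem_augmentationIdeal 𝒜 d)
    hnil hbound hhom hdK).exists_seq
end
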